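/- For 0 < δ < 1, ν = (1-√δ)/(1+√δ), and θ ∈ (-1/2, 1/2), the identity tan( (π/2)(2θ - h_{1/ν}(θ) - h_ν(θ)) ) = δ sin(2πθ) / (1 + δ cos(2πθ)) holds. -/

import Mathlib

/-!
With `s = √δ` and `t = tan (πθ/2)`, the Möbius map hidden in `h` collapses:
`h_ν(θ) = (2/π) arctan ((t - s)/(1 - s t))`, and `h_{1/ν}` is the same with `s ↦ -s`.
If `y` is the sum of these two arctangents, the half-angle substitution shows that `sin y` and
`cos y` are the same nonzero multiple of `(1 - δ) sin πθ` and `(1 + δ) cos πθ`; in complex terms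
`e^{iy}` is a positive multiple of `e^{iπθ} + δ e^{-iπθ}`. Hence `πθ - y` is an argument of
`1 + δ e^{2πiθ}`, whose tangent is `δ sin 2πθ / (1 + δ cos 2πθ)`.
-/

open Real

noncomputable def h (ν θ : ℝ) : ℝ :=
  (2 / π) * arctan (((ν + 1) * tan (π * θ / 2) + (ν - 1)) /
    ((ν - 1) * tan (π * θ / 2) + (ν + 1)))

lemma h_one_sub_div_one_add (s θ : ℝ) (hs : 1 + s ≠ 0) :
    h ((1 - s) / (1 + s)) θ =
      2 / π * arctan ((tan (π * θ / 2) - s) / (1 - s * tan (π * θ / 2))) := by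
  unfold h
  set t := tan (π * θ / 2)
  have hnum : ((1 - s) / (1 + s) + 1) * t + ((1 - s) / (1 + s) - 1) = 2 / (1 + s) * (t - s) := by
    field_simp; ring
  have hden : ((1 - s) / (1 + s) - 1) * t + ((1 - s) / (1 + s) + 1) =
      2 / (1 + s) * (1 - s * t) := by
    field_simp; ring
  rw [hnum, hden, mul_div_mul_left _ _ (div_ne_zero two_ne_zero hs)]

lemma sin_arctan_eq_mul_cos_arctan (a : ℝ) : sin (arctan a) = a * cos (arctan a) := by
  rw [sin_arctan, cos_arctan, mul_one_div]

lemma sin_arctan_add_arctan (a b : ℝ) :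
    sin (arctan a + arctan b) = cos (arctan a) * cos (arctan b) * (a + b) := by
  rw [sin_add, sin_arctan_eq_mul_cos_arctan a, sin_arctan_eq_mul_cos_arctan b]
  ring

lemma cos_arctan_add_arctan (a b : ℝ) :
    cos (arctan a + arctan b) = cos (arctan a) * cos (arctan b) * (1 - a * b) := by
  rw [cos_add, sin_arctan_eq_mul_cos_arctan a, sin_arctan_eq_mul_cos_arctan b]
  ring

lemma tan_sub_eq_of_sin_cos_eq_mul (δ k x y : ℝ) (hk : k ≠ 0)
    (hsin : sin y = k * ((1 - δ) * sin x)) (hcos : cos y = k * ((1 + δ) * cos x)) :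
    tan (x - y) = δ * sin (2 * x) / (1 + δ * cos (2 * x)) := by
  rw [tan_eq_sin_div_cos, sin_sub, cos_sub, hsin, hcos, sin_two_mul, cos_two_mul']
  rw [show sin x * (k * ((1 + δ) * cos x)) - cos x * (k * ((1 - δ) * sin x)) =
      k * (δ * (2 * sin x * cos x)) by ring,
    show cos x * (k * ((1 + δ) * cos x)) + sin x * (k * ((1 - δ) * sin x)) =
      k * (1 + δ * (cos x ^ 2 - sin x ^ 2)) by linear_combination k * sin_sq_add_cos_sq x,
    mul_div_mul_left _ _ hk]

theorem tan_sub_arctan_add_arctan (s x : ℝ) (hx : cos x ≠ -1)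
    (hst : (s * tan (x / 2)) ^ 2 ≠ 1) :
    tan (x - (arctan ((tan (x / 2) - s) / (1 - s * tan (x / 2))) +
      arctan ((tan (x / 2) + s) / (1 + s * tan (x / 2))))) =
      s ^ 2 * sin (2 * x) / (1 + s ^ 2 * cos (2 * x)) := by
  set t := tan (x / 2)
  have hsub : 1 - s * t ≠ 0 := fun h0 => hst (by linear_combination (-1 - s * t) * h0)
  have hadd : 1 + s * t ≠ 0 := fun h0 => hst (by linear_combination (s * t - 1) * h0)
  have ht : 1 + t ^ 2 ≠ 0 := by positivity
  have hsinx : sin x = 2 * t / (1 + t ^ 2) := sin_eq_two_mul_tan_half_div_one_add_tan_half_sq x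
  have hcosx : cos x = (1 - t ^ 2) / (1 + t ^ 2) :=
    cos_eq_two_mul_tan_half_div_one_sub_tan_half_sq x hx
  have hsum : (t - s) / (1 - s * t) + (t + s) / (1 + s * t) =
      (1 + t ^ 2) / ((1 - s * t) * (1 + s * t)) * ((1 - s ^ 2) * sin x) := by
    rw [hsinx, div_add_div _ _ hsub hadd]
    field_simp
    ring
  have hprod : 1 - (t - s) / (1 - s * t) * ((t + s) / (1 + s * t)) =
      (1 + t ^ 2) / ((1 - s * t) * (1 + s * t)) * ((1 + s ^ 2) * cos x) := by
    rw [hcosx, div_mul_div_comm, one_sub_div (mul_ne_zero hsub hadd)]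
    field_simp
    ring
  set a := (t - s) / (1 - s * t)
  set b := (t + s) / (1 + s * t)
  apply tan_sub_eq_of_sin_cos_eq_mul _
    (cos (arctan a) * cos (arctan b) * ((1 + t ^ 2) / ((1 - s * t) * (1 + s * t))))
  · exact mul_ne_zero (mul_ne_zero (cos_arctan_pos _).ne' (cos_arctan_pos _).ne')
      (div_ne_zero ht (mul_ne_zero hsub hadd))
  · rw [sin_arctan_add_arctan, hsum]; ring
  · rw [cos_arctan_add_arctan, hprod]; ring

theorem tan_double_diff (δ : ℝ) (hδ : 0 < δ) (hδ1 : δ < 1)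
    (θ : ℝ) (hθ : θ ∈ Set.Ioo (-(1:ℝ)/2) (1/2)) :
    tan (π / 2 * (2 * θ - h (1 / ((1 - Real.sqrt δ) / (1 + Real.sqrt δ))) θ
        - h ((1 - Real.sqrt δ) / (1 + Real.sqrt δ)) θ)) =
      δ * sin (2 * π * θ) / (1 + δ * cos (2 * π * θ)) := by
  obtain ⟨hθ1, hθ2⟩ := hθ
  set s := √δ
  have hs0 : 0 < s := sqrt_pos.mpr hδ
  have hs2 : s ^ 2 = δ := sq_sqrt hδ.le
  have hs1 : s < 1 := by nlinarith
  have hcos : 0 < cos (π * θ) :=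
    cos_pos_of_mem_Ioo ⟨by nlinarith [pi_pos], by nlinarith [pi_pos]⟩
  set t := tan (π * θ / 2)
  have ht : t ^ 2 < 1 := by
    have := cos_eq_two_mul_tan_half_div_one_sub_tan_half_sq (π * θ) (by linarith) ▸ hcos
    linarith [(div_pos_iff_of_pos_right (by positivity)).mp this]
  have hst : (s * t) ^ 2 ≠ 1 := by
    rw [mul_pow, hs2]
    nlinarith [sq_nonneg t]
  have hν : h ((1 - s) / (1 + s)) θ = 2 / π * arctan ((t - s) / (1 - s * t)) :=
    h_one_sub_div_one_add s θ (by linarith)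
  have hν_inv : h (1 / ((1 - s) / (1 + s))) θ = 2 / π * arctan ((t + s) / (1 + s * t)) := by
    rw [one_div_div]
    have := h_one_sub_div_one_add (-s) θ (by linarith)
    rwa [sub_neg_eq_add, sub_neg_eq_add, ← sub_eq_add_neg, neg_mul, sub_neg_eq_add] at this
  rw [hν_inv, hν,
    show π / 2 * (2 * θ - 2 / π * arctan ((t + s) / (1 + s * t)) -
        2 / π * arctan ((t - s) / (1 - s * t))) =
      π * θ - (arctan ((t - s) / (1 - s * t)) + arctan ((t + s) / (1 + s * t))) by
      field_simp; ring,
    tan_sub_arctan_add_arctan _ _ (by linarith) hst, hs2, ← mul_assoc]
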